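/- arXiv:1001.2341 — 2 statements merged into one kernel-verified Lean document; each statement's English description precedes it below -/
import Mathlib

section
/- The assignment sending a diagram (D, R : D → Cat) to the category D ⋉ D' — whose objects are pairs (d, ψ_d) with d ∈ D and ψ_d : R(d) → D' a functor, and whose morphisms (d₁,ψ₁) → (d₂,ψ₂) are pairs (f, φ) with f : d₁ → d₂ in D and φ : ψ₁ ⟹ ψ₂ ∘ R(f) a natural transformation — defines a category, and the assignment (d, ψ_d) ↦ R(d) ⋉_{ψ_d} D' extends to a functor R ⋉ R' : D ⋉ D' → Cat. -/
open CategoryTheory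

universe v₁ u₁ v₂ u₂ v u

variable {D : Type u₁} [Category.{v₁} D] {D' : Type u₂} [Category.{v₂} D']

/-- Objects of `D ⋉ D'`: pairs `(d, ψ_d)` with `d ∈ D` and `ψ_d : R(d) ⥤ D'` a functor. -/
structure DltObj (R : D ⥤ Cat.{v, u}) (D' : Type u₂) [Category.{v₂} D'] where
  d : D
  ψ : R.obj d ⥤ D'

/-- Morphisms `(d₁,ψ₁) → (d₂,ψ₂)`: pairs `(f, φ)` with `f : d₁ → d₂` in `D` and
`φ : ψ₁ ⟹ R(f) ⋙ ψ₂` a natural transformation. -/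
structure DltHom {R : D ⥤ Cat.{v, u}} (X Y : DltObj R D') where
  f : X.d ⟶ Y.d
  φ : X.ψ ⟶ (R.map f).toFunctor ⋙ Y.ψ

variable {R : D ⥤ Cat.{v, u}}

/-- The identity morphism of `D ⋉ D'`. -/
def DltId (X : DltObj R D') : DltHom X X :=
  ⟨𝟙 X.d, eqToHom (by rw [R.map_id]; rfl)⟩

/-- Composition in `D ⋉ D'`. -/
def DltComp {X Y Z : DltObj R D'} (f : DltHom X Y) (g : DltHom Y Z) : DltHom X Z :=
  ⟨f.f ≫ g.f, f.φ ≫ Functor.whiskerLeft (R.map f.f).toFunctor g.φ ≫ eqToHom (by rw [R.map_comp]; rfl)⟩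

/-! The composition of `D ⋉ D'` pastes lax triangles `φ : ψ ⟶ G ⋙ ψ'`, and it sees the functors
`R(f)` only through the equations `R(𝟙) = 𝟭` and `R(f) ⋙ R(g) = R(f ≫ g)`. Once these are abstracted
into hypotheses on arbitrary functors they can be substituted away, and the category axioms become
the strict identities of whiskering. The semidirect product `R(d) ⋉_ψ D'` is the Grothendieck
construction of `ψ ⋙ R'`, on which `(f, φ)` acts by `Grothendieck.map (φ ▷ R')` followed by
`Grothendieck.pre` along `R(f)`; functoriality then comes from that of `map` and `pre` and the
interchange law `pre_comp_map`. -/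

section LaxSlice

variable {A B C C' E : Type*} [Category A] [Category B] [Category C] [Category C'] [Category E]

-- `DltComp f g` is definitionally `laxSliceComp (hK : R(f) ⋙ R(g) = R(f ≫ g)) f.φ g.φ`.
def laxSliceComp {ψ : A ⥤ E} {ψ' : B ⥤ E} {ψ'' : C ⥤ E} {G : A ⥤ B} {G' : B ⥤ C}
    {K : A ⥤ C} (hK : G ⋙ G' = K) (φ : ψ ⟶ G ⋙ ψ') (φ' : ψ' ⟶ G' ⋙ ψ'') : ψ ⟶ K ⋙ ψ'' :=
  φ ≫ Functor.whiskerLeft G φ' ≫ eqToHom (by rw [← hK]; rfl)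

lemma laxSliceComp_eqToHom_left {ψ : A ⥤ E} {ψ' : B ⥤ E} {G : A ⥤ A} {G' : A ⥤ B}
    {K : A ⥤ B} (hG : G = 𝟭 A) (hK : G ⋙ G' = K) (φ : ψ ⟶ G' ⋙ ψ') :
    laxSliceComp hK (eqToHom (by subst hG; rfl : ψ = G ⋙ ψ)) φ ≍ φ := by
  subst hG hK
  apply heq_of_eq
  ext
  simp [laxSliceComp]

lemma laxSliceComp_eqToHom_right {ψ : A ⥤ E} {ψ' : B ⥤ E} {G : A ⥤ B} {G' : B ⥤ B}
    {K : A ⥤ B} (hG' : G' = 𝟭 B) (hK : G ⋙ G' = K) (φ : ψ ⟶ G ⋙ ψ') :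
    laxSliceComp hK φ (eqToHom (by subst hG'; rfl : ψ' = G' ⋙ ψ')) ≍ φ := by
  subst hG' hK
  simp [laxSliceComp]

lemma laxSliceComp_assoc {ψ : A ⥤ E} {ψ' : B ⥤ E} {ψ'' : C ⥤ E} {ψ''' : C' ⥤ E}
    {G : A ⥤ B} {G' : B ⥤ C} {G'' : C ⥤ C'} {K₁ : A ⥤ C} {K₂ : B ⥤ C'} {L₁ L₂ : A ⥤ C'}
    (h₁ : G ⋙ G' = K₁) (h₂ : K₁ ⋙ G'' = L₁) (h₃ : G' ⋙ G'' = K₂) (h₄ : G ⋙ K₂ = L₂)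
    (φ : ψ ⟶ G ⋙ ψ') (φ' : ψ' ⟶ G' ⋙ ψ'') (φ'' : ψ'' ⟶ G'' ⋙ ψ''') :
    laxSliceComp h₂ (laxSliceComp h₁ φ φ') φ'' ≍ laxSliceComp h₄ φ (laxSliceComp h₃ φ' φ'') := by
  subst h₁ h₂ h₃ h₄
  apply heq_of_eq
  ext
  simp [laxSliceComp]

variable (R' : E ⥤ Cat.{v, u})

def semidirectMap {ψ : A ⥤ E} {ψ' : B ⥤ E} (G : A ⥤ B) (φ : ψ ⟶ G ⋙ ψ') :
    Grothendieck (ψ ⋙ R') ⥤ Grothendieck (ψ' ⋙ R') :=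
  Grothendieck.map (Functor.whiskerRight φ R') ⋙ Grothendieck.pre (ψ' ⋙ R') G

lemma semidirectMap_eqToHom {ψ : A ⥤ E} {G : A ⥤ A} (hG : G = 𝟭 A) :
    semidirectMap R' G (eqToHom (by subst hG; rfl : ψ = G ⋙ ψ)) = 𝟭 _ := by
  subst hG
  simp only [semidirectMap, eqToHom_refl, Functor.whiskerRight_id', Grothendieck.map_id_eq]
  rfl

lemma semidirectMap_laxSliceComp {ψ : A ⥤ E} {ψ' : B ⥤ E} {ψ'' : C ⥤ E} {G : A ⥤ B}
    {G' : B ⥤ C} {K : A ⥤ C} (hK : G ⋙ G' = K) (φ : ψ ⟶ G ⋙ ψ') (φ' : ψ' ⟶ G' ⋙ ψ'') :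
    semidirectMap R' K (laxSliceComp hK φ φ') = semidirectMap R' G φ ⋙ semidirectMap R' G' φ' := by
  subst hK
  simp only [semidirectMap, laxSliceComp, eqToHom_refl, Category.comp_id,
    Functor.whiskerRight_comp, Grothendieck.map_comp_eq, Grothendieck.pre_comp]
  rfl

end LaxSlice

lemma DltHom.ext_of_heq {X Y : DltObj R D'} {a b : DltHom X Y} (hf : a.f = b.f)
    (hφ : a.φ ≍ b.φ) : a = b := by
  cases a; cases b
  cases hf
  cases hφ
  rfl

lemma map_id_toFunctor (d : D) : (R.map (𝟙 d)).toFunctor = 𝟭 (R.obj d) :=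
  congrArg Cat.Hom.toFunctor (R.map_id d)

lemma map_comp_toFunctor {d₁ d₂ d₃ : D} (f : d₁ ⟶ d₂) (g : d₂ ⟶ d₃) :
    (R.map f).toFunctor ⋙ (R.map g).toFunctor = (R.map (f ≫ g)).toFunctor :=
  congrArg Cat.Hom.toFunctor (R.map_comp f g).symm

lemma Dlt_id_comp (X Y : DltObj R D') (f : DltHom X Y) : DltComp (DltId X) f = f :=
  DltHom.ext_of_heq (Category.id_comp f.f) <|
    laxSliceComp_eqToHom_left (map_id_toFunctor X.d) (map_comp_toFunctor _ _) f.φ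

lemma Dlt_comp_id (X Y : DltObj R D') (f : DltHom X Y) : DltComp f (DltId Y) = f :=
  DltHom.ext_of_heq (Category.comp_id f.f) <|
    laxSliceComp_eqToHom_right (map_id_toFunctor Y.d) (map_comp_toFunctor _ _) f.φ

lemma Dlt_assoc (W X Y Z : DltObj R D') (f : DltHom W X) (g : DltHom X Y) (h : DltHom Y Z) :
    DltComp (DltComp f g) h = DltComp f (DltComp g h) :=
  DltHom.ext_of_heq (Category.assoc f.f g.f h.f) <|
    laxSliceComp_assoc (map_comp_toFunctor _ _) (map_comp_toFunctor _ _)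
      (map_comp_toFunctor _ _) (map_comp_toFunctor _ _) f.φ g.φ h.φ

/-- `D ⋉ D'` is a category, and `(d, ψ_d) ↦ R(d) ⋉_{ψ_d} D'` (realized as the Grothendieck
construction of `ψ_d ⋙ R'`) extends to a functor `R ⋉ R' : D ⋉ D' ⥤ Cat`: there is an
assignment on morphisms which is prescribed on objects by
`(a, b) ↦ (R(f)(a), R'(φ_a)(b))` and preserves identities and composition. -/
theorem Dlt_is_category_and_semidirect_extends_to_functor (R' : D' ⥤ Cat.{v, u}) :
    -- category axioms for `D ⋉ D'`
    ((∀ (X Y : DltObj R D') (f : DltHom X Y), DltComp (DltId X) f = f) ∧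
     (∀ (X Y : DltObj R D') (f : DltHom X Y), DltComp f (DltId Y) = f) ∧
     (∀ (W X Y Z : DltObj R D') (f : DltHom W X) (g : DltHom X Y) (h : DltHom Y Z),
        DltComp (DltComp f g) h = DltComp f (DltComp g h))) ∧
    -- functoriality of `(d, ψ_d) ↦ R(d) ⋉_{ψ_d} D'`
    (∃ Fmap : ∀ {X Y : DltObj R D'}, DltHom X Y →
        (Grothendieck (X.ψ ⋙ R') ⥤ Grothendieck (Y.ψ ⋙ R')),
      (∀ {X Y : DltObj R D'} (f : DltHom X Y) (p : Grothendieck (X.ψ ⋙ R')),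
        (Fmap f).obj p = ⟨(R.map f.f).toFunctor.obj p.base, (R'.map (f.φ.app p.base)).toFunctor.obj p.fiber⟩) ∧
      (∀ X : DltObj R D', Fmap (DltId X) = 𝟭 (Grothendieck (X.ψ ⋙ R'))) ∧
      (∀ {X Y Z : DltObj R D'} (f : DltHom X Y) (g : DltHom Y Z),
        Fmap (DltComp f g) = Fmap f ⋙ Fmap g)) :=
  ⟨⟨Dlt_id_comp, Dlt_comp_id, Dlt_assoc⟩, fun f => semidirectMap R' _ f.φ, fun _ _ => rfl,
    fun X => semidirectMap_eqToHom R' (map_id_toFunctor X.d),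
    fun f g => semidirectMap_laxSliceComp R' (map_comp_toFunctor f.f g.f) f.φ g.φ⟩
end

section
/- Let 𝒮 be a simplicial set with category of simplices S, and ψ : S → SSet a functor. Then the semidirect product category S ⋉_ψ SSet‾ — with objects pairs (a, b) where a is a simplex of 𝒮 and b is a simplex of the simplicial set ψ(a) — is isomorphic to the category of simplices of a bisimplicial set 𝕋, where 𝕋_{m,n} = ⨿_{a ∈ 𝒮_m} ψ(a)_n, with objects the bisimplices and morphisms the bisimplicial operators. -/
/-!
In both categories the objects are the pairs `(a, b)` of a simplex `a` of `𝒮` and a simplex `b` of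
`ψ(a)`, and a morphism `(a, b) ⟶ (a', b')` is a pair of simplicial operators `(α, β)` with
`α^* a = a'` and `β^* (ψ(α) b) = b'`, so the evident functor is bijective on objects and on
hom-sets. The real content is that `(α, β) ↦ ((a, b) ↦ (α^* a, β^* ψ(α) b))` is functorial:
composing two such steps requires moving `ψ(α')` past `β^*`, which is the naturality of `ψ(α')`.
-/

open CategoryTheory

/-- The category-of-simplices functor `SSet ⥤ Cat`. -/
def sElements : SSet.{0} ⥤ Cat.{0, 0} where
  obj X := Cat.of X.Elements
  map f := (CategoryOfElements.map f).toCatHom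
  map_id X := by rfl
  map_comp f g := by rfl

namespace CategoryTheory

universe w v₁ v₂ u₁ u₂

open CategoryOfElements

variable {C : Type u₁} [Category.{v₁} C]

lemma CategoryOfElements.eqToHom_val {F : C ⥤ Type w} {x y : F.Elements} (h : x = y) :
    (eqToHom h).val = eqToHom (congrArg Sigma.fst h) := by
  subst h
  rfl

variable {D : Type u₂} [Category.{v₂} D] {X : C ⥤ Type w} (ψ : X.Elements ⥤ D ⥤ Type w)

def elementsSigmaObj (cd : C × D) : Type w :=
  Σ a : X.obj cd.1, (ψ.obj (X.elementsMk cd.1 a)).obj cd.2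

def elementsSigmaMap {cd cd' : C × D} (f : cd ⟶ cd') (p : elementsSigmaObj ψ cd) :
    elementsSigmaObj ψ cd' :=
  ⟨X.map f.1 p.1, (ψ.obj _).map f.2
    ((ψ.map (homMk (X.elementsMk _ p.1) _ f.1 rfl)).app cd.2 p.2)⟩

lemma elementsSigmaMap_mk_eq_mk_iff {cd cd' : C × D} (f : cd ⟶ cd') (a : X.obj cd.1)
    (b : (ψ.obj (X.elementsMk cd.1 a)).obj cd.2) (a' : X.obj cd'.1)
    (b' : (ψ.obj (X.elementsMk cd'.1 a')).obj cd'.2) :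
    elementsSigmaMap ψ f ⟨a, b⟩ = ⟨a', b'⟩ ↔ ∃ h : X.map f.1 a = a',
      (ψ.obj _).map f.2 ((ψ.map (homMk _ _ f.1 h)).app cd.2 b) = b' := by
  refine ⟨fun h => ?_, fun ⟨h, h'⟩ => ?_⟩
  · obtain ⟨rfl, hb⟩ := Sigma.mk.inj_iff.1 h
    exact ⟨rfl, eq_of_heq hb⟩
  · subst h h'
    rfl

def elementsSigma : C × D ⥤ Type w where
  obj := elementsSigmaObj ψ
  map f := TypeCat.ofHom (elementsSigmaMap ψ f)
  map_id cd := by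
    ext ⟨a, b⟩
    refine (elementsSigmaMap_mk_eq_mk_iff ψ _ a b a b).2 ⟨by simp, ?_⟩
    have hid : homMk (X.elementsMk _ a) _ (𝟙 cd.1) (by simp) = 𝟙 _ := rfl
    simp [hid]
  map_comp {cd₁ cd₂ cd₃} f g := by
    ext ⟨a, b⟩
    change elementsSigmaMap ψ (f ≫ g) ⟨a, b⟩ = elementsSigmaMap ψ g (elementsSigmaMap ψ f ⟨a, b⟩)
    refine (elementsSigmaMap_mk_eq_mk_iff ψ _ a b (X.map g.1 (X.map f.1 a)) _).2 ⟨by simp, ?_⟩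
    have hcomp : homMk (X.elementsMk _ a) (X.elementsMk cd₃.1 (X.map g.1 (X.map f.1 a)))
        (f ≫ g).1 (by simp) =
          homMk _ (X.elementsMk cd₂.1 (X.map f.1 a)) f.1 rfl ≫ homMk _ _ g.1 rfl :=
      rfl
    rw [hcomp, ψ.map_comp]
    change (ψ.obj _).map (f.2 ≫ g.2) ((ψ.map _).app _ ((ψ.map _).app _ b)) = _
    rw [Functor.map_comp_apply]
    exact congrArg _ (NatTrans.naturality_apply _ _ _).symm

def grothendieckToElementsSigma :
    Grothendieck (ψ ⋙ Functor.elementsFunctor) ⥤ (elementsSigma ψ).Elements where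
  obj P := ⟨(P.base.1, P.fiber.1), P.base.2, P.fiber.2⟩
  map F := ⟨(F.base.1, F.fiber.1),
    (elementsSigmaMap_mk_eq_mk_iff ψ _ _ _ _ _).2 ⟨F.base.2, F.fiber.2⟩⟩
  map_id P := by
    ext
    · rfl
    · exact (CategoryOfElements.eqToHom_val _).trans (eqToHom_refl _ _)
  map_comp F F' := by
    ext
    · rfl
    · change (Grothendieck.Hom.fiber (F ≫ F')).val = F.fiber.val ≫ F'.fiber.val
      rw [Grothendieck.comp_fiber]
      erw [CategoryOfElements.comp_val, CategoryOfElements.comp_val,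
        CategoryOfElements.eqToHom_val, eqToHom_refl, Category.id_comp]
      rfl

instance : (grothendieckToElementsSigma ψ).Faithful where
  map_injective {P Q} := by
    rintro ⟨F, G⟩ ⟨F', G'⟩ h
    obtain rfl : F = F' := Subtype.ext (congrArg (·.val.1) h)
    obtain rfl : G = G' := Subtype.ext (congrArg (·.val.2) h)
    rfl

instance : (grothendieckToElementsSigma ψ).Full where
  map_surjective {P Q} φ := by
    obtain ⟨hbase, hfiber⟩ := (elementsSigmaMap_mk_eq_mk_iff ψ _ _ _ _ _).1 φ.2
    exact ⟨⟨⟨φ.1.1, hbase⟩, ⟨φ.1.2, hfiber⟩⟩, rfl⟩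

instance : (grothendieckToElementsSigma ψ).EssSurj where
  mem_essImage P :=
    ⟨⟨X.elementsMk P.1.1 P.2.1, Functor.elementsMk _ P.1.2 P.2.2⟩, ⟨Iso.refl _⟩⟩

instance : (grothendieckToElementsSigma ψ).IsEquivalence where

noncomputable def elementsSigmaElementsEquiv :
    (elementsSigma ψ).Elements ≌ Grothendieck (ψ ⋙ Functor.elementsFunctor) :=
  (grothendieckToElementsSigma ψ).asEquivalence.symm

end CategoryTheory

/-- Let `𝒮` be a simplicial set with category of simplices `S` and `ψ : S ⥤ SSet` a functor.
The semidirect product category `S ⋉_ψ SSet‾` (realized as the Grothendieck construction of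
`ψ ⋙ R`, with objects the pairs `(a, b)` of a simplex `a` of `𝒮` and a simplex `b` of
`ψ(a)`) is isomorphic to the category of simplices of the bisimplicial set `𝕋` with
`𝕋_{m,n} = ⨿_{a ∈ 𝒮_m} ψ(a)_n`. -/
theorem semidirect_is_category_of_simplices_of_bisimplicial
    (X : SSet.{0}) (ψ : X.Elements ⥤ SSet.{0}) :
    ∃ T : SimplexCategoryᵒᵖ × SimplexCategoryᵒᵖ ⥤ Type,
      (∀ mn : SimplexCategoryᵒᵖ × SimplexCategoryᵒᵖ,
        T.obj mn = Σ a : X.obj mn.1, (ψ.obj (X.elementsMk mn.1 a)).obj mn.2) ∧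
      Nonempty (T.Elements ≌ Grothendieck (ψ ⋙ sElements)) :=
  -- `sElements` is `Functor.elementsFunctor` on the nose
  ⟨elementsSigma ψ, fun _ => rfl, ⟨elementsSigmaElementsEquiv ψ⟩⟩
end
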